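/- arXiv:2112.01904 — 3 statements merged into one kernel-verified Lean document; each statement's English description precedes it below -/
import Mathlib

section
/- A pair (i,j) with i ≠ j is an edge of the fill graph G_A⁺ if and only if the pattern graph G_A contains a simple path from i to j all of whose internal vertices have indices smaller than min(i,j). -/
/-- Eliminating vertex `j` of a graph: add a clique on the higher-numbered
neighbors of `j`. -/
def elim {n : ℕ} (G : Fin n → Fin n → Prop) (j : Fin n) : Fin n → Fin n → Prop :=
  fun a b => G a b ∨ (a ≠ b ∧ j < a ∧ j < b ∧ G j a ∧ G j b)

/-- The fill graph: eliminate the vertices `0, 1, …, n-1` in order. -/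
def fillRel {n : ℕ} (G : Fin n → Fin n → Prop) : Fin n → Fin n → Prop :=
  (List.finRange n).foldl elim G

/-!
Eliminating the vertices of an increasing list `L` connects `a ≠ b` exactly when some path from
`a` to `b` has all its internal vertices in `L` and below `min a b`. Appending the largest vertex
`k` to `L` is the induction step: a new fill edge `a b` comes from fill edges `k a` and `k b`,
whose paths concatenate through `k`; conversely a path through `k` is split at `k`, and its two
halves only use vertices of `L` below `k` (as `L` is increasing) besides their endpoints.
-/

namespace SimpleGraph.Walk

variable {V : Type*} {G : SimpleGraph V} {u v w : V}

def InternalVerticesIn (p : G.Walk u v) (s : Set V) : Prop :=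
  ∀ x ∈ p.support, x ≠ u → x ≠ v → x ∈ s

theorem InternalVerticesIn.mono {p : G.Walk u v} {s t : Set V} (hp : p.InternalVerticesIn s)
    (hst : s ⊆ t) : p.InternalVerticesIn t :=
  fun x hx hxu hxv => hst (hp x hx hxu hxv)

@[simp]
theorem internalVerticesIn_reverse {p : G.Walk u v} {s : Set V} :
    p.reverse.InternalVerticesIn s ↔ p.InternalVerticesIn s := by
  simp only [InternalVerticesIn, support_reverse, List.mem_reverse]
  exact ⟨fun h x hx hxu hxv => h x hx hxv hxu, fun h x hx hxv hxu => h x hx hxu hxv⟩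

theorem InternalVerticesIn.append {p : G.Walk u v} {q : G.Walk v w} {s : Set V}
    (hp : p.InternalVerticesIn s) (hq : q.InternalVerticesIn s) :
    (p.append q).InternalVerticesIn (insert v s) := by
  intro x hx hxu hxw
  by_cases hxv : x = v
  · exact Or.inl hxv
  rcases (mem_support_append_iff p q).mp hx with hx | hx
  · exact Or.inr (hp x hx hxu hxv)
  · exact Or.inr (hq x hx hxv hxw)

theorem InternalVerticesIn.bypass [DecidableEq V] {p : G.Walk u v} {s : Set V}
    (hp : p.InternalVerticesIn s) : p.bypass.InternalVerticesIn s :=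
  fun x hx => hp x (p.support_bypass_subset_support hx)

theorem IsPath.internalVerticesIn_takeUntil [DecidableEq V] {p : G.Walk u v} {s : Set V}
    (hp : p.IsPath) (hs : p.InternalVerticesIn s) (hw : w ∈ p.support) :
    (p.takeUntil w hw).InternalVerticesIn (s \ {w}) := by
  intro x hx hxu hxw
  have hxv : x ≠ v := by
    rintro rfl
    exact endpoint_notMem_support_takeUntil hp hw hxw hx
  exact ⟨hs x (p.support_takeUntil_subset_support hw hx) hxu hxv, hxw⟩

theorem exists_isPath_internalVerticesIn_empty_iff (huv : u ≠ v) :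
    (∃ p : G.Walk u v, p.IsPath ∧ p.InternalVerticesIn ∅) ↔ G.Adj u v := by
  constructor
  · rintro ⟨p, -, hp⟩
    cases p with
    | nil => exact absurd rfl huv
    | @cons _ x _ hux q =>
      by_cases hxv : x = v
      · exact hxv ▸ hux
      · exact (hp x (List.mem_cons_of_mem _ q.start_mem_support) hux.ne' hxv).elim
  · intro h
    refine ⟨h.toWalk, h.isPath_toWalk, fun x hx hxu hxv => ?_⟩
    simp only [h.support_toWalk, List.mem_cons, List.not_mem_nil, or_false] at hx
    exact hx.elim hxu hxv

end SimpleGraph.Walk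

open SimpleGraph Walk

section Elimination

variable {n : ℕ} (G : SimpleGraph (Fin n))

def fillPathRel (L : List (Fin n)) (a b : Fin n) : Prop :=
  a ≠ b ∧ ∃ p : G.Walk a b, p.IsPath ∧ p.InternalVerticesIn {w | w ∈ L ∧ w < a ∧ w < b}

theorem fillPathRel_nil : fillPathRel G [] = G.Adj := by
  funext a b
  by_cases hab : a = b
  · simp [fillPathRel, hab]
  · simp only [fillPathRel, List.not_mem_nil, false_and, Set.ofPred_false, ne_eq, hab,
      not_false_eq_true, true_and]
    exact propext (exists_isPath_internalVerticesIn_empty_iff hab)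

variable {G}

theorem fillPathRel_concat_of_elim {L : List (Fin n)} {k a b : Fin n}
    (h : elim (fillPathRel G L) k a b) : fillPathRel G (L ++ [k]) a b := by
  rcases h with ⟨hab, p, hp, hs⟩ | ⟨hab, hka, hkb, ⟨-, pa, -, hsa⟩, ⟨-, pb, -, hsb⟩⟩
  · refine ⟨hab, p, hp, hs.mono fun x ⟨hxL, hxa, hxb⟩ => ⟨List.mem_append_left _ hxL, hxa, hxb⟩⟩
  · refine ⟨hab, (pa.reverse.append pb).bypass, bypass_isPath _, ?_⟩
    have hsa' : pa.reverse.InternalVerticesIn {x | x ∈ L ∧ x < k} :=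
      internalVerticesIn_reverse.mpr (hsa.mono fun x ⟨hxL, hxk, _⟩ => ⟨hxL, hxk⟩)
    have hsb' : pb.InternalVerticesIn {x | x ∈ L ∧ x < k} :=
      hsb.mono fun x ⟨hxL, hxk, _⟩ => ⟨hxL, hxk⟩
    refine (hsa'.append hsb').bypass.mono ?_
    rintro x (rfl | ⟨hxL, hxk⟩)
    · exact ⟨by simp, hka, hkb⟩
    · exact ⟨List.mem_append_left _ hxL, hxk.trans hka, hxk.trans hkb⟩

theorem elim_of_fillPathRel_concat {L : List (Fin n)} {k a b : Fin n} (hk : ∀ x ∈ L, x < k)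
    (h : fillPathRel G (L ++ [k]) a b) : elim (fillPathRel G L) k a b := by
  obtain ⟨hab, p, hp, hs⟩ := h
  have mem_below {x : Fin n} (hx : x ∈ L ++ [k]) (hxk : x ≠ k) : x ∈ L ∧ x < k := by
    have hxL : x ∈ L := by simpa [hxk] using hx
    exact ⟨hxL, hk x hxL⟩
  by_cases hkp : k ∈ p.support ∧ k ≠ a ∧ k ≠ b
  · obtain ⟨hkp, hka, hkb⟩ := hkp
    obtain ⟨-, hka, hkb⟩ := hs k hkp hka hkb
    -- split `p` at `k`; the second half is read off the reversed path
    have hta := hp.internalVerticesIn_takeUntil hs hkp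
    have htb := hp.reverse.internalVerticesIn_takeUntil (internalVerticesIn_reverse.mpr hs)
      (by simpa using hkp)
    refine Or.inr ⟨hab, hka, hkb, ⟨hka.ne, (p.takeUntil k hkp).reverse,
      (hp.takeUntil hkp).reverse, internalVerticesIn_reverse.mpr (hta.mono ?_)⟩,
      ⟨hkb.ne, (p.reverse.takeUntil k _).reverse, (hp.reverse.takeUntil _).reverse,
      internalVerticesIn_reverse.mpr (htb.mono ?_)⟩⟩
    · rintro x ⟨⟨hxL, hxa, -⟩, hxk⟩
      exact ⟨(mem_below hxL hxk).1, (mem_below hxL hxk).2, hxa⟩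
    · rintro x ⟨⟨hxL, -, hxb⟩, hxk⟩
      exact ⟨(mem_below hxL hxk).1, (mem_below hxL hxk).2, hxb⟩
  · refine Or.inl ⟨hab, p, hp, fun x hx hxa hxb => ?_⟩
    obtain ⟨hxL, hxa', hxb'⟩ := hs x hx hxa hxb
    exact ⟨(mem_below hxL fun hxk => hkp ⟨hxk ▸ hx, hxk ▸ hxa, hxk ▸ hxb⟩).1, hxa', hxb'⟩

theorem elim_fillPathRel {L : List (Fin n)} {k : Fin n} (hk : ∀ x ∈ L, x < k) :
    elim (fillPathRel G L) k = fillPathRel G (L ++ [k]) := by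
  funext a b
  exact propext ⟨fillPathRel_concat_of_elim, elim_of_fillPathRel_concat hk⟩

theorem foldl_elim_eq_fillPathRel {L : List (Fin n)} (hL : L.Pairwise (· < ·)) :
    L.foldl elim G.Adj = fillPathRel G L := by
  induction L using List.reverseRecOn with
  | nil => exact (fillPathRel_nil G).symm
  | append_singleton L k ih =>
    rw [List.pairwise_append] at hL
    rw [List.foldl_append, List.foldl_cons, List.foldl_nil, ih hL.1,
      elim_fillPathRel fun x hx => hL.2.2 x hx k (List.mem_singleton_self k)]

end Elimination

/-- Fill-path characterization of fill: `(i,j)` is an edge of the fill graph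
iff the graph contains a simple path from `i` to `j` whose internal vertices
all have indices smaller than `min i j`. -/
theorem fill_path_characterization {n : ℕ}
    (G : SimpleGraph (Fin n)) (i j : Fin n) (hij : i ≠ j) :
    fillRel G.Adj i j ↔
      ∃ p : G.Walk i j, p.IsPath ∧
        ∀ v ∈ p.support, v ≠ i → v ≠ j → v < min i j := by
  rw [fillRel, foldl_elim_eq_fillPathRel (List.sortedLT_finRange n).pairwise]
  simp only [fillPathRel, InternalVerticesIn, List.mem_finRange, true_and, lt_min_iff,
    Set.mem_ofPred_eq]
  exact and_iff_right hij
end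

section
/- If A_{i,j} ≠ 0 or (i,j) is a fill position in the Cholesky factorization of a symmetric positive-definite matrix A, then (i,j) is an edge of the fill graph G_A⁺. -/
/-!
A nonzero entry `L a m` (with `m < a`) of the Cholesky factor is an edge `{m, a}` of the graph
obtained by eliminating the vertices `< m`. This follows by strong induction on `m`: either
`A m a ≠ 0`, or the identity `A m a = ∑_{p < m} L m p L a p + L m m L a m` together with
`L m m ≠ 0` (as `det A = (det L)² ≠ 0`) yields some `p < m` with `L m p ≠ 0 ≠ L a p`, so `m`
and `a` are both fill neighbours of `p` and become adjacent when `p` is eliminated. A fill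
position `(i, j)` likewise yields `p < j` with `L i p ≠ 0 ≠ L j p`.
-/

open Matrix

/-- The pattern graph of a symmetric matrix. -/
def patternRel {n : ℕ} (A : Matrix (Fin n) (Fin n) ℝ) : Fin n → Fin n → Prop :=
  fun i j => i ≠ j ∧ A i j ≠ 0

open Finset

namespace FillGraph

variable {n : ℕ}

def fillUpTo (k : ℕ) (G : Fin n → Fin n → Prop) : Fin n → Fin n → Prop :=
  ((List.finRange n).take k).foldl elim G

theorem foldl_elim_of_rel (l : List (Fin n)) {G : Fin n → Fin n → Prop} {a b : Fin n}
    (h : G a b) : l.foldl elim G a b := by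
  induction l generalizing G with
  | nil => exact h
  | cons x xs ih => exact ih (Or.inl h)

theorem fillUpTo_of_rel (k : ℕ) {G : Fin n → Fin n → Prop} {a b : Fin n} (h : G a b) :
    fillUpTo k G a b :=
  foldl_elim_of_rel _ h

theorem fillUpTo_mono {k k' : ℕ} (hk : k ≤ k') {G : Fin n → Fin n → Prop} {a b : Fin n}
    (h : fillUpTo k G a b) : fillUpTo k' G a b := by
  unfold fillUpTo at *
  rw [← List.take_append_drop k ((List.finRange n).take k'), List.take_take,
    min_eq_left hk, List.foldl_append]
  exact foldl_elim_of_rel _ h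

theorem fillRel_of_fillUpTo {k : ℕ} {G : Fin n → Fin n → Prop} {a b : Fin n}
    (h : fillUpTo k G a b) : fillRel G a b := by
  unfold fillRel
  rw [← List.take_append_drop k (List.finRange n), List.foldl_append]
  exact foldl_elim_of_rel _ h

theorem fillUpTo_succ_of_common {G : Fin n → Fin n → Prop} {p a b : Fin n} (hpa : p < a)
    (hpb : p < b) (hab : a ≠ b) (ha : fillUpTo p G p a) (hb : fillUpTo p G p b) :
    fillUpTo (p + 1) G a b := by
  unfold fillUpTo at *
  have hp : (List.finRange n)[(p : ℕ)]? = some p := by simp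
  rw [List.take_add_one, hp, Option.toList_some, List.foldl_append, List.foldl_cons,
    List.foldl_nil]
  exact Or.inr ⟨hab, hpa, hpb, ha, hb⟩

end FillGraph

theorem Finset.exists_ne_zero_and_ne_zero_of_sum_mul_ne_zero {ι R : Type*}
    [NonUnitalNonAssocSemiring R] {s : Finset ι} {f g : ι → R}
    (h : ∑ p ∈ s, f p * g p ≠ 0) : ∃ p ∈ s, f p ≠ 0 ∧ g p ≠ 0 := by
  obtain ⟨p, hp, hfg⟩ := exists_ne_zero_of_sum_ne_zero h
  exact ⟨p, hp, left_ne_zero_of_mul hfg, right_ne_zero_of_mul hfg⟩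

namespace Matrix

variable {ι R : Type*} [Fintype ι] [LinearOrder ι]

theorem IsLowerTriangular.mul_transpose_apply [NonUnitalNonAssocSemiring R]
    {L : Matrix ι ι R} (hL : L.IsLowerTriangular) (m a : ι) :
    (L * Lᵀ) m a = ∑ p ∈ univ.filter (· < m), L m p * L a p + L m m * L a m := by
  rw [mul_apply, ← sum_filter_add_sum_filter_not univ (· < m)]
  congr 1
  refine sum_eq_single m (fun p hp hpm => ?_) (by simp)
  rw [mem_filter, not_lt] at hp
  have hmp : m < p := lt_of_le_of_ne hp.2 (Ne.symm hpm)
  rw [hL (OrderDual.toDual_lt_toDual.mpr hmp), zero_mul]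

theorem IsLowerTriangular.diag_ne_zero [DecidableEq ι] [CommRing R] [IsDomain R]
    {L : Matrix ι ι R} (hL : L.IsLowerTriangular) (hdet : L.det ≠ 0) (m : ι) : L m m ≠ 0 := by
  rw [det_of_isLowerTriangular L hL] at hdet
  exact prod_ne_zero_iff.mp hdet m (mem_univ m)

end Matrix

open FillGraph

theorem fillUpTo_patternRel_of_ne_zero {n : ℕ} {L : Matrix (Fin n) (Fin n) ℝ}
    (hL : L.IsLowerTriangular) (hdiag : ∀ m, L m m ≠ 0) {m a : Fin n} (hma : m < a)
    (hLam : L a m ≠ 0) : fillUpTo m (patternRel (L * Lᵀ)) m a := by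
  induction m using WellFoundedLT.induction generalizing a with
  | _ m ih =>
  by_cases hA : (L * Lᵀ) m a = 0
  · have hsum : ∑ p ∈ univ.filter (· < m), L m p * L a p ≠ 0 := by
      rw [hL.mul_transpose_apply, add_eq_zero_iff_eq_neg] at hA
      rw [hA, neg_ne_zero]
      exact mul_ne_zero (hdiag m) hLam
    obtain ⟨p, hp, hmp, hap⟩ := exists_ne_zero_and_ne_zero_of_sum_mul_ne_zero hsum
    have hpm : p < m := (mem_filter.mp hp).2
    exact fillUpTo_mono hpm (fillUpTo_succ_of_common hpm (hpm.trans hma) hma.ne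
      (ih p hpm hpm hmp) (ih p hpm (hpm.trans hma) hap))
  · exact fillUpTo_of_rel _ ⟨hma.ne, hA⟩

/-- Nonzeros of `A` and fill positions of its Cholesky factorization are edges
of the fill graph. -/
theorem fill_subset_fill_graph {n : ℕ}
    (A L : Matrix (Fin n) (Fin n) ℝ)
    (hA : A.PosDef)
    (hlower : ∀ i j : Fin n, i < j → L i j = 0)
    (hfac : A = L * Lᵀ)
    (i j : Fin n) (hji : j < i)
    (h : A i j ≠ 0 ∨
      (A i j = 0 ∧ ∃ k : ℕ, k < (j : ℕ) ∧
        A i j - ∑ m ∈ Finset.univ.filter (fun m : Fin n => (m : ℕ) < k),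
          L i m * L j m ≠ 0)) :
    fillRel (patternRel A) i j := by
  subst hfac
  have hL : L.IsLowerTriangular := fun a b hab => hlower a b hab
  have hdet : L.det ≠ 0 := fun h0 => hA.det_pos.ne' (by rw [det_mul, h0, zero_mul])
  rcases h with hij | ⟨hij, k, hkj, hsum⟩
  · exact fillRel_of_fillUpTo (fillUpTo_of_rel 0 ⟨hji.ne', hij⟩)
  · rw [hij, zero_sub, neg_ne_zero] at hsum
    obtain ⟨p, hp, hip, hjp⟩ := exists_ne_zero_and_ne_zero_of_sum_mul_ne_zero hsum
    have hpj : p < j := Fin.lt_def.mpr ((mem_filter.mp hp).2.trans hkj)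
    have hdiag := hL.diag_ne_zero hdet
    exact fillRel_of_fillUpTo (fillUpTo_succ_of_common (hpj.trans hji) hpj hji.ne'
      (fillUpTo_patternRel_of_ne_zero hL hdiag (hpj.trans hji) hip)
      (fillUpTo_patternRel_of_ne_zero hL hdiag hpj hjp))
end

section
/- Let B = LLᵀ be symmetric positive semidefinite with null(B) = null(A) for a symmetric matrix A. Then a nonzero scalar λ is an eigenvalue of B⁺A if and only if it is an eigenvalue of (L⁺)A(L⁺)ᵀ, where X⁺ denotes the Moore–Penrose pseudo-inverse. -/
open Matrix

/-! Since `(L Lᵀ)⁺ = (L⁺)ᵀ L⁺`, the matrix `B⁺ A` is `(L⁺)ᵀ (L⁺ A)` and `L⁺ A (L⁺)ᵀ` is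
`(L⁺ A) (L⁺)ᵀ`, and the products `X Y` and `Y X` have the same nonzero eigenvalues:
`Y` maps an eigenvector of `X Y` for `λ ≠ 0` to one of `Y X`. -/

/-- `P` is the Moore–Penrose pseudo-inverse of `M`. -/
def IsMoorePenrose {n m : ℕ} (M : Matrix (Fin n) (Fin m) ℝ)
    (P : Matrix (Fin m) (Fin n) ℝ) : Prop :=
  M * P * M = M ∧ P * M * P = P ∧ (M * P)ᵀ = M * P ∧ (P * M)ᵀ = P * M

namespace IsMoorePenrose

variable {n m : ℕ} {M : Matrix (Fin n) (Fin m) ℝ}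

theorem unique {P Q : Matrix (Fin m) (Fin n) ℝ}
    (hP : IsMoorePenrose M P) (hQ : IsMoorePenrose M Q) : P = Q := by
  obtain ⟨p1, p2, p3, p4⟩ := hP
  obtain ⟨q1, q2, q3, q4⟩ := hQ
  have hMQ : M * Q = M * P := by
    calc M * Q = (M * P * M * Q)ᵀ := by rw [p1, q3]
      _ = (M * Q)ᵀ * (M * P)ᵀ := by rw [Matrix.mul_assoc _ M Q, transpose_mul]
      _ = M * P := by rw [q3, p3, ← Matrix.mul_assoc, q1]
  have hQM : Q * M = P * M := by
    calc Q * M = (Q * (M * P * M))ᵀ := by rw [p1, q4]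
      _ = (P * M)ᵀ * (Q * M)ᵀ := by rw [Matrix.mul_assoc, ← Matrix.mul_assoc, transpose_mul]
      _ = P * M := by rw [q4, p4, Matrix.mul_assoc, ← Matrix.mul_assoc M, q1]
  calc P = Q * M * P := by rw [hQM, p2]
    _ = Q := by rw [Matrix.mul_assoc, ← hMQ, ← Matrix.mul_assoc, q2]

theorem mul_transpose_self {P : Matrix (Fin m) (Fin n) ℝ} (hP : IsMoorePenrose M P) :
    IsMoorePenrose (M * Mᵀ) (Pᵀ * P) := by
  obtain ⟨h1, h2, h3, h4⟩ := hP
  have hPMMt : P * (M * Mᵀ) = Mᵀ := by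
    rw [← Matrix.mul_assoc, ← h4, ← transpose_mul, ← Matrix.mul_assoc, h1]
  have hright : M * Mᵀ * (Pᵀ * P) = M * P := by
    rw [Matrix.mul_assoc, ← Matrix.mul_assoc Mᵀ, ← transpose_mul, h4, ← Matrix.mul_assoc,
      ← Matrix.mul_assoc, h1]
  have hleft : Pᵀ * P * (M * Mᵀ) = M * P := by
    rw [Matrix.mul_assoc, hPMMt, ← transpose_mul, h3]
  refine ⟨?_, ?_, ?_, ?_⟩
  · rw [hright, Matrix.mul_assoc, hPMMt]
  · rw [Matrix.mul_assoc, hright, Matrix.mul_assoc, ← Matrix.mul_assoc P, h2]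
  · rw [hright, h3]
  · rw [hleft, h3]

end IsMoorePenrose

section EigenvectorMulComm

variable {K : Type*} [Field K] {m n : Type*} [Fintype m] [Fintype n] {lam : K}

theorem Matrix.exists_eigenvector_mul_comm_of_ne_zero (X : Matrix m n K) (Y : Matrix n m K)
    (hlam : lam ≠ 0) (h : ∃ v : m → K, v ≠ 0 ∧ (X * Y) *ᵥ v = lam • v) :
    ∃ w : n → K, w ≠ 0 ∧ (Y * X) *ᵥ w = lam • w := by
  obtain ⟨v, hv, heig⟩ := h
  refine ⟨Y *ᵥ v, fun hYv => ?_, ?_⟩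
  · have : lam • v = 0 := by rw [← heig, ← mulVec_mulVec, hYv, mulVec_zero]
    exact hv ((smul_eq_zero.mp this).resolve_left hlam)
  · rw [mulVec_mulVec, Matrix.mul_assoc, ← mulVec_mulVec, heig, mulVec_smul]

theorem Matrix.exists_eigenvector_mul_comm_iff_of_ne_zero (X : Matrix m n K) (Y : Matrix n m K)
    (hlam : lam ≠ 0) :
    (∃ v : m → K, v ≠ 0 ∧ (X * Y) *ᵥ v = lam • v) ↔
      ∃ w : n → K, w ≠ 0 ∧ (Y * X) *ᵥ w = lam • w :=
  ⟨exists_eigenvector_mul_comm_of_ne_zero X Y hlam,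
    exists_eigenvector_mul_comm_of_ne_zero Y X hlam⟩

end EigenvectorMulComm

theorem eigenvalues_pseudoinverse_preconditioning_general {n : ℕ}
    (A B L Bp Lp : Matrix (Fin n) (Fin n) ℝ)
    (hfac : B = L * Lᵀ)
    (hBp : IsMoorePenrose B Bp) (hLp : IsMoorePenrose L Lp)
    (lam : ℝ) (hlam : lam ≠ 0) :
    (∃ v : Fin n → ℝ, v ≠ 0 ∧ (Bp * A).mulVec v = lam • v) ↔
    (∃ v : Fin n → ℝ, v ≠ 0 ∧ (Lp * A * Lpᵀ).mulVec v = lam • v) := by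
  subst hfac
  have hBp_eq : Bp = Lpᵀ * Lp := hBp.unique hLp.mul_transpose_self
  rw [hBp_eq, Matrix.mul_assoc]
  exact exists_eigenvector_mul_comm_iff_of_ne_zero Lpᵀ (Lp * A) hlam

theorem eigenvalues_pseudoinverse_preconditioning {n : ℕ}
    (A B L Bp Lp : Matrix (Fin n) (Fin n) ℝ)
    (hA : A = Aᵀ)
    (hfac : B = L * Lᵀ)
    (hBpsd : B.PosSemidef)
    (hnull : ∀ v : Fin n → ℝ, B.mulVec v = 0 ↔ A.mulVec v = 0)
    (hBp : IsMoorePenrose B Bp) (hLp : IsMoorePenrose L Lp)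
    (lam : ℝ) (hlam : lam ≠ 0) :
    (∃ v : Fin n → ℝ, v ≠ 0 ∧ (Bp * A).mulVec v = lam • v) ↔
    (∃ v : Fin n → ℝ, v ≠ 0 ∧ (Lp * A * Lpᵀ).mulVec v = lam • v) :=
  eigenvalues_pseudoinverse_preconditioning_general A B L Bp Lp hfac hBp hLp lam hlam
end
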